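/- Suppose r+1 divides g and let s = g/(r+1). Then the number of transposed SSYT of rectangular shape (r+1)×(rs) with content (r^g) equals g! · (1!·2!···r!)/(s!·(s+1)!···(s+r)!). -/

import Mathlib

/-- A transposed semistandard Young tableau with at most r+1 rows and content (i^g):
rows strictly increase left to right, columns weakly increase bottom to top,
each of 1,…,g appears exactly i times. Cells are `some v` (filled) or `none`. -/
structure TrSSYT (g r i : ℕ) where
  entry : Fin (r+1) → ℕ → Option ℕ
  left : ∀ (row : Fin (r+1)) (j j' : ℕ), (entry row j).isSome → j' ≤ j → (entry row j').isSome
  down : ∀ (row row' : Fin (r+1)) (j : ℕ), (entry row j).isSome → row' ≤ row → (entry row' j).isSome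
  vals : ∀ (row : Fin (r+1)) (j : ℕ) (v : ℕ), entry row j = some v → 1 ≤ v ∧ v ≤ g
  content : ∀ v : ℕ, 1 ≤ v → v ≤ g →
    {p : Fin (r+1) × ℕ | entry p.1 p.2 = some v}.ncard = i
  row_strict : ∀ (row : Fin (r+1)) (j j' : ℕ) (a b : ℕ),
    entry row j = some a → entry row j' = some b → j < j' → a < b
  col_weak : ∀ (row row' : Fin (r+1)) (j : ℕ) (a b : ℕ),
    entry row j = some a → entry row' j = some b → row < row' → a ≤ b

/-!
Every value v ∈ [1, g] occurs in exactly r of the r + 1 rows of such a tableau, so the tableau is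
encoded by the word whose v-th letter is the row that misses v; each letter then occurs s times.
A row is the complement of a letter class, and comparing the rows entrywise (the column condition)
amounts to comparing how many entries ≤ v they have, i.e. to a ballot condition on the prefixes of
the word. Ballot words of content c are counted by deleting the last letter: the resulting
recursion is also satisfied by n! · det (1 / (c_i + i - j)!), by multilinearity of the determinant
in the rows. For constant content s this determinant is a Vandermonde determinant.
-/

open Finset Matrix Nat

namespace Matrix

variable {n R : Type*} [Fintype n] [DecidableEq n] [CommRing R]

theorem det_updateRow_eq_sum_mul_adjugate (A : Matrix n n R) (k : n) (v : n → R) :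
    (A.updateRow k v).det = ∑ j, v j * A.adjugate j k := by
  rw [← cramer_transpose_apply, cramer_eq_adjugate_mulVec, ← adjugate_transpose, mulVec]
  simp only [dotProduct, transpose_apply, mul_comm]

theorem sum_det_updateRow_sub_mul (A : Matrix n n R) (a b : n → R) :
    ∑ k, (A.updateRow k fun j => (a k - b j) * A k j).det =
      (∑ k, a k - ∑ j, b j) * A.det := by
  have hrow (k : n) : ∑ j, A k j * A.adjugate j k = A.det := by
    simpa [mul_apply] using congrFun (congrFun A.mul_adjugate k) k
  have hcol (j : n) : ∑ k, A k j * A.adjugate j k = A.det := by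
    simpa [mul_apply, mul_comm] using congrFun (congrFun A.adjugate_mul j) j
  simp only [det_updateRow_eq_sum_mul_adjugate, sub_mul, mul_assoc, sum_sub_distrib,
    ← mul_sum, hrow]
  rw [sum_comm]
  simp only [← mul_sum, hcol, sum_mul]

end Matrix

def invFactorial (m : ℤ) : ℚ := if 0 ≤ m then ((m.toNat)! : ℚ)⁻¹ else 0

theorem invFactorial_of_neg {m : ℤ} (h : m < 0) : invFactorial m = 0 := by
  simp [invFactorial, h]

theorem invFactorial_natCast (m : ℕ) : invFactorial m = (m ! : ℚ)⁻¹ := by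
  simp [invFactorial]

theorem invFactorial_sub_one (m : ℤ) : invFactorial (m - 1) = m * invFactorial m := by
  rcases lt_trichotomy m 0 with h | rfl | h
  · rw [invFactorial_of_neg (by omega), invFactorial_of_neg h, mul_zero]
  · simp [invFactorial_of_neg]
  · lift m to ℕ using h.le
    obtain ⟨m, rfl⟩ := Nat.exists_eq_add_one.mpr (Int.natCast_pos.mp h)
    rw [invFactorial_natCast, Nat.cast_succ, add_sub_cancel_right, invFactorial_natCast,
      factorial_succ]
    push_cast
    field_simp

theorem invFactorial_natCast_sub (a b : ℕ) :
    invFactorial (a - b) = (a.descFactorial b : ℚ) / a ! := by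
  rcases le_or_gt b a with h | h
  · rw [← Nat.cast_sub h, invFactorial_natCast, ← Nat.factorial_mul_descFactorial h]
    have := descFactorial_pos.mpr h
    push_cast
    field_simp
  · rw [invFactorial_of_neg (by omega), descFactorial_of_lt h]
    simp

def ballotMatrix {K : ℕ} (c : Fin K → ℤ) : Matrix (Fin K) (Fin K) ℚ :=
  Matrix.of fun i j => invFactorial (c i + i - j)

theorem ballotMatrix_apply {K : ℕ} (c : Fin K → ℤ) (i j : Fin K) :
    ballotMatrix c i j = invFactorial (c i + i - j) := rfl

theorem sum_det_ballotMatrix_update_sub_one {K : ℕ} (c : Fin K → ℤ) :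
    ∑ k, (ballotMatrix (Function.update c k (c k - 1))).det =
      (∑ k, c k) * (ballotMatrix c).det := by
  have hrow (k : Fin K) : ballotMatrix (Function.update c k (c k - 1)) =
      (ballotMatrix c).updateRow k fun j =>
        (((c k + k : ℤ) : ℚ) - (j : ℚ)) * ballotMatrix c k j := by
    ext i j
    rcases eq_or_ne i k with rfl | hi
    · rw [updateRow_self, ballotMatrix_apply, ballotMatrix_apply, Function.update_self,
        show c i - 1 + i - j = (c i + i - j) - 1 by ring, invFactorial_sub_one]
      push_cast
      ring
    · rw [updateRow_ne hi, ballotMatrix_apply, ballotMatrix_apply, Function.update_of_ne hi]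
  simp only [hrow, sum_det_updateRow_sub_mul, Int.cast_add, sum_add_distrib, Int.cast_natCast]
  push_cast
  ring

theorem det_ballotMatrix_zero (K : ℕ) : (ballotMatrix (0 : Fin K → ℤ)).det = 1 := by
  have h : (ballotMatrix (0 : Fin K → ℤ)).IsLowerTriangular := fun i j (hij : i < j) =>
    invFactorial_of_neg (by simp only [Pi.zero_apply, zero_add, sub_neg]; exact_mod_cast hij)
  simp [det_of_isLowerTriangular _ h, ballotMatrix_apply, invFactorial]

theorem det_ballotMatrix_const (r s : ℕ) :
    (ballotMatrix fun _ : Fin (r + 1) => (s : ℤ)).det =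
      (∏ t ∈ range (r + 1), (t ! : ℚ)) / ∏ t ∈ range (r + 1), ((s + t)! : ℚ) := by
  have hM : ballotMatrix (fun _ : Fin (r + 1) => (s : ℤ)) =
      diagonal (fun i : Fin (r + 1) => ((s + i : ℕ)! : ℚ)⁻¹) *
        of fun i j : Fin (r + 1) => (descPochhammer ℚ j).eval ((i : ℚ) + s) := by
    ext i j
    rw [diagonal_mul, of_apply, ballotMatrix_apply,
      show (s : ℤ) + i - j = ((s + i : ℕ) : ℤ) - (j : ℕ) by push_cast; ring,
      invFactorial_natCast_sub, show (i : ℚ) + s = ((s + i : ℕ) : ℚ) by push_cast; ring,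
      descPochhammer_eval_eq_descFactorial, div_eq_inv_mul]
  rw [hM, det_mul, det_diagonal, ← det_eval_matrixOfPolynomials_eq_det_vandermonde _ _
    (fun j => descPochhammer_natDegree ℚ j) (fun j => monic_descPochhammer ℚ j),
    det_vandermonde_add, det_vandermonde_id_eq_superFactorial, ← prod_range_succ_factorial,
    Fin.prod_univ_eq_prod_range (fun i => ((s + i)! : ℚ)⁻¹), prod_inv_distrib]
  push_cast
  ring

section Ballot

variable {n K : ℕ}

def prefixCount (w : Fin n → Fin K) (v : ℕ) (k : Fin K) : ℕ := #{u | u.val < v ∧ w u = k}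

def IsBallot (w : Fin n → Fin K) : Prop := ∀ v, Monotone (prefixCount w v)

theorem prefixCount_of_le (w : Fin n → Fin K) {v : ℕ} (hv : n ≤ v) :
    prefixCount w v = prefixCount w n := by
  ext k
  simp only [prefixCount, Fin.is_lt, (Fin.is_lt _).trans_le hv, true_and]

theorem prefixCount_snoc_of_le (w : Fin n → Fin K) (a : Fin K) {v : ℕ} (hv : v ≤ n) :
    prefixCount (Fin.snoc w a) v = prefixCount w v := by
  ext k
  simp only [prefixCount, card_filter, Fin.sum_univ_castSucc, Fin.snoc_castSucc, Fin.val_last,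
    Fin.val_castSucc, Nat.not_lt.mpr hv, false_and, if_false, add_zero]

theorem prefixCount_snoc_succ (w : Fin n → Fin K) (a : Fin K) :
    prefixCount (Fin.snoc w a) (n + 1) = prefixCount w n + Pi.single a 1 := by
  ext k
  simp only [prefixCount, card_filter, Fin.sum_univ_castSucc, Fin.snoc_castSucc, Fin.snoc_last,
    Fin.is_lt, true_and, Pi.add_apply, Pi.single_apply, eq_comm]

theorem isBallot_snoc_iff (w : Fin n → Fin K) (a : Fin K) :
    IsBallot (Fin.snoc w a) ↔ IsBallot w ∧ Monotone (prefixCount w n + Pi.single a 1) := by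
  constructor
  · intro h
    refine ⟨fun v => ?_, prefixCount_snoc_succ w a ▸ h (n + 1)⟩
    rcases le_or_gt v n with hv | hv
    · exact prefixCount_snoc_of_le w a hv ▸ h v
    · exact prefixCount_of_le w hv.le ▸ prefixCount_snoc_of_le w a le_rfl ▸ h n
  · rintro ⟨hw, hlast⟩ v
    rcases le_or_gt v n with hv | hv
    · exact prefixCount_snoc_of_le w a hv ▸ hw v
    · exact prefixCount_of_le (Fin.snoc w a) hv ▸ prefixCount_snoc_succ w a ▸ hlast

theorem card_subtype_snoc {α : Type*} [Fintype α] (P : (Fin (n + 1) → α) → Prop) :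
    Nat.card {w // P w} = ∑ a, Nat.card {w : Fin n → α // P (Fin.snoc w a)} := by
  rw [← Nat.card_sigma, ← Nat.card_congr (Equiv.subtypeProdEquivSigmaSubtype
    fun a (w : Fin n → α) => P (Fin.snoc w a))]
  exact Nat.card_congr ((Fin.snocEquiv fun _ => α).subtypeEquiv fun _ => Iff.rfl).symm

theorem add_single_one_eq_iff {f c : Fin K → ℕ} {a : Fin K} :
    f + Pi.single a 1 = c ↔ 0 < c a ∧ f = Function.update c a (c a - 1) := by
  constructor
  · rintro rfl
    refine ⟨by simp, funext fun k => ?_⟩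
    rcases eq_or_ne k a with rfl | hk <;> simp [*]
  · rintro ⟨ha, rfl⟩
    funext k
    rcases eq_or_ne k a with rfl | hk
    · simp only [Pi.add_apply, Function.update_self, Pi.single_eq_same] at ha ⊢; omega
    · simp [hk]

theorem monotone_update_sub_one {c : Fin K → ℕ} (hc : Monotone c) {a : Fin K}
    (h : ∀ j < a, c j < c a) : Monotone (Function.update c a (c a - 1)) := by
  intro i j hij
  simp only [Function.update_apply]
  split_ifs with hi hj hj
  · exact le_rfl
  · have := hc (hi ▸ hij : a ≤ j); omega
  · have := h i (lt_of_le_of_ne (hj ▸ hij) hi); omega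
  · exact hc hij

theorem det_ballotMatrix_update_eq_zero {c : Fin K → ℕ} (hc : Monotone c) {a : Fin K}
    (h : ¬ (0 < c a ∧ Monotone (Function.update c a (c a - 1)))) :
    (ballotMatrix (Function.update (fun k => (c k : ℤ)) a (c a - 1))).det = 0 := by
  -- Either a = 0 and row a vanishes, or rows a - 1 and a of the matrix coincide.
  obtain ⟨_ | p, hp⟩ := a
  · have hca : c ⟨0, hp⟩ = 0 := by
      by_contra hca
      exact h ⟨Nat.pos_of_ne_zero hca, monotone_update_sub_one hc fun j hj =>
        absurd (Fin.lt_def.mp hj) (Nat.not_lt_zero _)⟩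
    refine det_eq_zero_of_row_eq_zero ⟨0, hp⟩ fun j => invFactorial_of_neg ?_
    simp only [Function.update_self, hca]
    omega
  · set b : Fin K := ⟨p, by omega⟩
    have hba : b < ⟨p + 1, hp⟩ := Fin.mk_lt_mk.mpr p.lt_succ_self
    have hcb : c b = c ⟨p + 1, hp⟩ := by
      refine (hc hba.le).antisymm (not_lt.mp fun hlt => h ⟨by omega,
        monotone_update_sub_one hc fun j hj => lt_of_le_of_lt (hc ?_) hlt⟩)
      exact Fin.le_def.mpr (by simp [Fin.lt_def] at hj; omega)
    refine det_zero_of_row_eq hba.ne ?_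
    funext j
    simp only [ballotMatrix_apply, Function.update_self, Function.update_of_ne hba.ne, hcb]
    congr 1
    simp [b]

theorem sum_update_sub_one {c : Fin K → ℕ} {a : Fin K} (ha : 0 < c a) :
    ∑ k, Function.update c a (c a - 1) k + 1 = ∑ k, c k := by
  rw [sum_update_of_mem (mem_univ a), sdiff_singleton_eq_erase,
    ← add_sum_erase univ c (mem_univ a)]
  omega

theorem natCast_update_sub_one {c : Fin K → ℕ} {a : Fin K} (ha : 0 < c a) :
    (fun k => (Function.update c a (c a - 1) k : ℤ)) =
      Function.update (fun k => (c k : ℤ)) a (c a - 1) := by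
  funext k
  rcases eq_or_ne k a with rfl | hk
  · simp only [Function.update_self]
    omega
  · simp only [Function.update_of_ne hk]

theorem isBallot_snoc_and_prefixCount_eq_iff {c : Fin K → ℕ} (hc : Monotone c)
    (w : Fin n → Fin K) (a : Fin K) :
    (IsBallot (Fin.snoc w a) ∧ prefixCount (Fin.snoc w a) (n + 1) = c) ↔
      IsBallot w ∧ 0 < c a ∧ prefixCount w n = Function.update c a (c a - 1) := by
  rw [isBallot_snoc_iff, prefixCount_snoc_succ, ← add_single_one_eq_iff]
  exact ⟨fun ⟨⟨hw, _⟩, he⟩ => ⟨hw, he⟩, fun ⟨hw, he⟩ => ⟨⟨hw, he ▸ hc⟩, he⟩⟩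

theorem card_isBallot_prefixCount_eq (c : Fin K → ℕ) (hc : Monotone c) (hn : ∑ k, c k = n) :
    (Nat.card {w : Fin n → Fin K // IsBallot w ∧ prefixCount w n = c} : ℚ) =
      n ! * (ballotMatrix fun k => (c k : ℤ)).det := by
  induction n generalizing c with
  | zero =>
    obtain rfl : c = 0 := funext fun k => (sum_eq_zero_iff.mp hn) k (mem_univ k)
    have hw (w : Fin 0 → Fin K) (v : ℕ) : prefixCount w v = 0 :=
      funext fun _ => by simp [prefixCount]
    have : Unique {w : Fin 0 → Fin K // IsBallot w ∧ prefixCount w 0 = 0} :=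
      ⟨⟨⟨Fin.elim0, fun v => hw _ v ▸ monotone_const, hw _ 0⟩⟩,
        fun _ => Subtype.ext (funext fun u => u.elim0)⟩
    rw [Nat.card_unique, Nat.cast_one, factorial_zero, Nat.cast_one, one_mul, Pi.zero_def]
    exact_mod_cast (det_ballotMatrix_zero K).symm
  | succ n ih =>
    have hletter (a : Fin K) :
        (Nat.card {w : Fin n → Fin K //
          IsBallot (Fin.snoc w a) ∧ prefixCount (Fin.snoc w a) (n + 1) = c} : ℚ) =
        n ! * (ballotMatrix (Function.update (fun k => (c k : ℤ)) a (c a - 1))).det := by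
      rw [Nat.card_congr (Equiv.subtypeEquivRight (isBallot_snoc_and_prefixCount_eq_iff hc · a))]
      set d := Function.update c a (c a - 1)
      by_cases hvalid : 0 < c a ∧ Monotone d
      · have hd : ∑ k, d k = n := Nat.succ_injective ((sum_update_sub_one hvalid.1).trans hn)
        simp only [hvalid.1, true_and]
        rw [ih d hvalid.2 hd, natCast_update_sub_one hvalid.1]
      · have : IsEmpty {w : Fin n → Fin K // IsBallot w ∧ 0 < c a ∧ prefixCount w n = d} :=
          ⟨fun ⟨w, hw, ha, he⟩ => hvalid ⟨ha, he ▸ hw n⟩⟩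
        rw [Nat.card_of_isEmpty, det_ballotMatrix_update_eq_zero hc hvalid]
        simp
    rw [card_subtype_snoc, Nat.cast_sum]
    simp only [hletter, ← mul_sum, sum_det_ballotMatrix_update_sub_one, factorial_succ]
    push_cast
    rw [← Nat.cast_sum, hn]
    push_cast
    ring

end Ballot

namespace Finset

variable {α : Type*} [LinearOrder α] {m : ℕ}

theorem card_filter_le_eq_card_filter_orderEmbOfFin_le (A : Finset α) (hA : #A = m) (v : α) :
    #{x ∈ A | x ≤ v} = #{i | A.orderEmbOfFin hA i ≤ v} := by
  conv_lhs => rw [← map_orderEmbOfFin_univ A hA, filter_map, card_map]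
  rfl

theorem orderEmbOfFin_le_orderEmbOfFin_iff {A B : Finset α} (hA : #A = m) (hB : #B = m) :
    (∀ j, A.orderEmbOfFin hA j ≤ B.orderEmbOfFin hB j) ↔
      ∀ v, #{x ∈ B | x ≤ v} ≤ #{x ∈ A | x ≤ v} := by
  simp only [card_filter_le_eq_card_filter_orderEmbOfFin_le _ hA,
    card_filter_le_eq_card_filter_orderEmbOfFin_le _ hB]
  refine ⟨fun h v => card_le_card fun i => by simpa using (h i).trans, fun h j => ?_⟩
  by_contra! hlt
  have hIic : Iic j ⊆ ({i | B.orderEmbOfFin hB i ≤ B.orderEmbOfFin hB j} : Finset _) :=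
    fun i hi => by simpa using (B.orderEmbOfFin hB).monotone (mem_Iic.mp hi)
  have hIio : ({i | A.orderEmbOfFin hA i ≤ B.orderEmbOfFin hB j} : Finset _) ⊆ Iio j := by
    intro i hi
    simp only [mem_filter, mem_univ, true_and] at hi
    exact mem_Iio.mpr ((A.orderEmbOfFin hA).lt_iff_lt.mp (hi.trans_lt hlt))
  have := (card_le_card hIic).trans ((h _).trans (card_le_card hIio))
  simp at this

end Finset

theorem Set.ncard_setOf_eq_some {ι α : Type*} [Fintype ι] (e : ι → ℕ → Option α) (v : α)
    (h : ∀ k j j', e k j = some v → e k j' = some v → j = j') :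
    {p : ι × ℕ | e p.1 p.2 = some v}.ncard = {k | ∃ j, e k j = some v}.ncard := by
  have hinj : Set.InjOn Prod.fst {p : ι × ℕ | e p.1 p.2 = some v} := by
    rintro ⟨k, j⟩ hj ⟨_, j'⟩ hj' rfl
    rw [h k j j' hj hj']
  rw [← hinj.ncard_image]
  congr 1
  ext k
  simp

/-- The last condition is the column condition in disguise, by
`Finset.orderEmbOfFin_le_orderEmbOfFin_iff`. -/
structure IsTableauRows (g i N : ℕ) {r : ℕ} (R : Fin (r + 1) → Finset ℕ) : Prop where
  card_eq : ∀ k, #(R k) = N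
  subset_Icc : ∀ k, R k ⊆ Icc 1 g
  card_filter_mem : ∀ v ∈ Icc 1 g, #{k | v ∈ R k} = i
  antitone_card_filter_le : ∀ v, Antitone fun k => #{x ∈ R k | x ≤ v}

namespace TrSSYT

variable {g r i N : ℕ}

def IsRectangular (T : TrSSYT g r i) (N : ℕ) : Prop := ∀ k j, (T.entry k j).isSome ↔ j < N

def rowSet (T : TrSSYT g r i) (N : ℕ) (k : Fin (r + 1)) : Finset ℕ :=
  univ.image fun j : Fin N => (T.entry k j).getD 0

theorem ext {T T' : TrSSYT g r i} (h : T.entry = T'.entry) : T = T' := by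
  cases T; cases T'; cases h; rfl

variable {T : TrSSYT g r i}

theorem entry_eq_some_getD (hT : T.IsRectangular N) (k : Fin (r + 1)) {j : ℕ} (hj : j < N) :
    T.entry k j = some ((T.entry k j).getD 0) := by
  obtain ⟨v, hv⟩ := Option.isSome_iff_exists.mp ((hT k j).mpr hj)
  simp [hv]

theorem strictMono_getD (hT : T.IsRectangular N) (k : Fin (r + 1)) :
    StrictMono fun j : Fin N => (T.entry k j).getD 0 := fun j j' hjj' =>
  T.row_strict k j j' _ _ (entry_eq_some_getD hT k j.2) (entry_eq_some_getD hT k j'.2) hjj'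

theorem card_rowSet (hT : T.IsRectangular N) (k : Fin (r + 1)) : #(T.rowSet N k) = N := by
  rw [rowSet, card_image_of_injective _ (strictMono_getD hT k).injective, Finset.card_univ,
    Fintype.card_fin]

theorem entry_eq_orderEmbOfFin (hT : T.IsRectangular N) (k : Fin (r + 1)) {j : ℕ} (hj : j < N) :
    T.entry k j = some ((T.rowSet N k).orderEmbOfFin (card_rowSet hT k) ⟨j, hj⟩) := by
  rw [entry_eq_some_getD hT k hj, ← orderEmbOfFin_unique (card_rowSet hT k)
    (fun j => mem_image_of_mem _ (mem_univ j)) (strictMono_getD hT k)]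

theorem mem_rowSet_iff (hT : T.IsRectangular N) {k : Fin (r + 1)} {v : ℕ} :
    v ∈ T.rowSet N k ↔ ∃ j, T.entry k j = some v := by
  simp only [rowSet, mem_image, mem_univ, true_and]
  constructor
  · rintro ⟨j, rfl⟩
    exact ⟨j, entry_eq_some_getD hT k j.2⟩
  · rintro ⟨j, hj⟩
    exact ⟨⟨j, (hT k j).mp (by simp [hj])⟩, by simp [hj]⟩

theorem rowSet_subset_Icc (hT : T.IsRectangular N) (k : Fin (r + 1)) :
    T.rowSet N k ⊆ Icc 1 g := fun v hv => by
  obtain ⟨j, hj⟩ := (mem_rowSet_iff hT).mp hv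
  exact mem_Icc.mpr (T.vals k j v hj)

theorem card_filter_mem_rowSet (hT : T.IsRectangular N) {v : ℕ} (hv : v ∈ Icc 1 g) :
    #{k | v ∈ T.rowSet N k} = i := by
  obtain ⟨hv1, hv2⟩ := mem_Icc.mp hv
  have := T.content v hv1 hv2
  rw [Set.ncard_setOf_eq_some _ _ fun k j j' hj hj' => by_contra fun hne => ?_] at this
  · rw [← Set.ncard_coe_finset]
    convert this using 2
    ext k
    simp [mem_rowSet_iff hT]
  · rcases lt_or_gt_of_ne hne with h | h
    · exact (T.row_strict k j j' v v hj hj' h).ne rfl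
    · exact (T.row_strict k j' j v v hj' hj h).ne rfl

theorem antitone_card_filter_rowSet (hT : T.IsRectangular N) (v : ℕ) :
    Antitone fun k => #{x ∈ T.rowSet N k | x ≤ v} := by
  intro k k' hkk'
  rcases hkk'.eq_or_lt with rfl | hlt
  · exact le_rfl
  refine (orderEmbOfFin_le_orderEmbOfFin_iff (card_rowSet hT k) (card_rowSet hT k')).mp
    (fun j => ?_) v
  exact T.col_weak k k' j _ _ (entry_eq_orderEmbOfFin hT k j.2)
    (entry_eq_orderEmbOfFin hT k' j.2) hlt

theorem eq_of_rowSet_eq {T' : TrSSYT g r i} (hT : T.IsRectangular N) (hT' : T'.IsRectangular N)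
    (h : T.rowSet N = T'.rowSet N) : T = T' := by
  refine ext (funext fun k => funext fun j => ?_)
  by_cases hj : j < N
  · rw [entry_eq_orderEmbOfFin hT k hj, entry_eq_orderEmbOfFin hT' k hj]
    simp only [h]
  · rw [Option.not_isSome_iff_eq_none.mp (mt (hT k j).mp hj),
      Option.not_isSome_iff_eq_none.mp (mt (hT' k j).mp hj)]

theorem isTableauRows_rowSet {T : TrSSYT g r i} (hT : T.IsRectangular N) :
    IsTableauRows g i N (T.rowSet N) :=
  ⟨card_rowSet hT, rowSet_subset_Icc hT, fun _ => card_filter_mem_rowSet hT,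
    antitone_card_filter_rowSet hT⟩

def ofRows (R : Fin (r + 1) → Finset ℕ) (hR : IsTableauRows g i N R) : TrSSYT g r i where
  entry k j := if h : j < N then some ((R k).orderEmbOfFin (hR.card_eq k) ⟨j, h⟩) else none
  left k j j' h hj' := by
    simp only [Option.isSome_dite] at h ⊢
    omega
  down k k' j h _ := by simpa only [Option.isSome_dite] using h
  vals k j v h := by
    split_ifs at h with hj
    exact mem_Icc.mp (hR.subset_Icc k (Option.some.inj h ▸ orderEmbOfFin_mem _ _ _))
  content v hv1 hv2 := by
    refine (Set.ncard_setOf_eq_some (fun k j =>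
      if h : j < N then some ((R k).orderEmbOfFin (hR.card_eq k) ⟨j, h⟩) else none) v
      fun k j j' hj hj' => ?_).trans
      (.trans ?_ (hR.card_filter_mem v (mem_Icc.mpr ⟨hv1, hv2⟩)))
    · split_ifs at hj hj'
      simpa using (orderEmbOfFin _ _).injective
        ((Option.some.inj hj).trans (Option.some.inj hj').symm)
    · rw [← Set.ncard_coe_finset]
      congr 1
      ext k
      simp only [Set.mem_ofPred_eq, coe_filter, mem_univ, true_and]
      constructor
      · rintro ⟨j, hj⟩
        split_ifs at hj
        exact Option.some.inj hj ▸ orderEmbOfFin_mem _ _ _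
      · intro hv
        obtain ⟨⟨j, hj⟩, rfl⟩ : v ∈ Set.range ((R k).orderEmbOfFin (hR.card_eq k)) := by
          rwa [range_orderEmbOfFin]
        exact ⟨j, dif_pos hj⟩
  row_strict k j j' a b ha hb hjj' := by
    split_ifs at ha hb with hj hj'
    rw [← Option.some.inj ha, ← Option.some.inj hb]
    exact (orderEmbOfFin _ _).strictMono hjj'
  col_weak k k' j a b ha hb hkk' := by
    split_ifs at ha hb with hj
    rw [← Option.some.inj ha, ← Option.some.inj hb]
    exact (orderEmbOfFin_le_orderEmbOfFin_iff _ _).mpr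
      (fun v => hR.antitone_card_filter_le v hkk'.le) ⟨j, hj⟩

theorem isRectangular_ofRows (R : Fin (r + 1) → Finset ℕ) (hR : IsTableauRows g i N R) :
    (ofRows R hR).IsRectangular N := fun k j => by
  simp only [ofRows, Option.isSome_dite]

theorem rowSet_ofRows (R : Fin (r + 1) → Finset ℕ) (hR : IsTableauRows g i N R) :
    (ofRows R hR).rowSet N = R := funext fun k => by
  simp only [rowSet, ofRows, Fin.is_lt, dif_pos, Fin.eta, Option.getD_some,
    image_orderEmbOfFin_univ]

theorem card_isRectangular_eq_card_isTableauRows :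
    Nat.card {T : TrSSYT g r i // T.IsRectangular N} =
      Nat.card {R : Fin (r + 1) → Finset ℕ // IsTableauRows g i N R} :=
  Nat.card_congr
    { toFun T := ⟨T.1.rowSet N, isTableauRows_rowSet T.2⟩
      invFun R := ⟨ofRows R.1 R.2, isRectangular_ofRows R.1 R.2⟩
      left_inv T := Subtype.ext <|
        eq_of_rowSet_eq (isRectangular_ofRows _ (isTableauRows_rowSet T.2)) T.2
          (rowSet_ofRows _ (isTableauRows_rowSet T.2))
      right_inv R := Subtype.ext (rowSet_ofRows R.1 R.2) }

end TrSSYT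

section Words

variable {g r : ℕ}

def rowsOfWord (w : Fin g → Fin (r + 1)) (k : Fin (r + 1)) : Finset ℕ :=
  ({u | w u ≠ k} : Finset (Fin g)).image fun u => u.val + 1

theorem Fin.val_add_one_injective : Function.Injective fun u : Fin g => u.val + 1 :=
  fun _ _ h => Fin.ext (Nat.succ_injective h)

theorem mem_rowsOfWord_iff {w : Fin g → Fin (r + 1)} {k : Fin (r + 1)} {v : ℕ} :
    v ∈ rowsOfWord w k ↔ ∃ u : Fin g, w u ≠ k ∧ u.val + 1 = v := by
  simp [rowsOfWord]

theorem succ_mem_rowsOfWord_iff {w : Fin g → Fin (r + 1)} {k : Fin (r + 1)} {u : Fin g} :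
    u.val + 1 ∈ rowsOfWord w k ↔ w u ≠ k := by
  rw [rowsOfWord, (Fin.val_add_one_injective (g := g)).mem_finset_image]
  simp

theorem rowsOfWord_subset_Icc (w : Fin g → Fin (r + 1)) (k : Fin (r + 1)) :
    rowsOfWord w k ⊆ Icc 1 g := fun v hv => by
  obtain ⟨u, -, rfl⟩ := mem_rowsOfWord_iff.mp hv
  exact mem_Icc.mpr ⟨by omega, u.2⟩

theorem card_filter_rowsOfWord_add_prefixCount (w : Fin g → Fin (r + 1)) (k : Fin (r + 1))
    (v : ℕ) : #{x ∈ rowsOfWord w k | x ≤ v} + prefixCount w v k = #{u : Fin g | u.val < v} := by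
  rw [rowsOfWord, filter_image, card_image_of_injective _ Fin.val_add_one_injective, prefixCount,
    filter_filter, ← card_filter_add_card_filter_not (s := {u : Fin g | u.val < v}) (w · = k),
    filter_filter, filter_filter, add_comm]
  simp only [Nat.add_one_le_iff, and_comm]

theorem card_filter_mem_rowsOfWord (w : Fin g → Fin (r + 1)) {v : ℕ} (hv : v ∈ Icc 1 g) :
    #{k | v ∈ rowsOfWord w k} = r := by
  obtain ⟨u, rfl⟩ : ∃ u : Fin g, u.val + 1 = v := ⟨⟨v - 1, by grind⟩, by grind⟩
  simp only [succ_mem_rowsOfWord_iff, ne_comm (a := w u), filter_ne', mem_univ,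
    card_erase_of_mem, Finset.card_univ, Fintype.card_fin, add_tsub_cancel_right]

theorem card_rowsOfWord_add_prefixCount (w : Fin g → Fin (r + 1)) (k : Fin (r + 1)) :
    #(rowsOfWord w k) + prefixCount w g k = g := by
  have := card_filter_rowsOfWord_add_prefixCount w k g
  rwa [filter_true_of_mem fun x hx => (mem_Icc.mp (rowsOfWord_subset_Icc w k hx)).2,
    filter_true_of_mem fun u _ => u.2, Finset.card_univ, Fintype.card_fin] at this

theorem isTableauRows_rowsOfWord_iff {s : ℕ} (hg : g = (r + 1) * s) (w : Fin g → Fin (r + 1)) :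
    IsTableauRows g r (r * s) (rowsOfWord w) ↔ IsBallot w ∧ prefixCount w g = fun _ => s := by
  have hcount (v : ℕ) (k : Fin (r + 1)) := card_filter_rowsOfWord_add_prefixCount w k v
  have hcard (k : Fin (r + 1)) := card_rowsOfWord_add_prefixCount w k
  have hg' : g = r * s + s := by rw [hg]; ring
  constructor
  · intro hR
    refine ⟨fun v k k' hkk' => ?_, funext fun k => ?_⟩
    · have : #{x ∈ rowsOfWord w k' | x ≤ v} ≤ #{x ∈ rowsOfWord w k | x ≤ v} :=
        hR.antitone_card_filter_le v hkk'
      have := hcount v k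
      have := hcount v k'
      omega
    · have := hR.card_eq k
      have := hcard k
      omega
  · rintro ⟨hw, hc⟩
    refine ⟨fun k => ?_, rowsOfWord_subset_Icc w, fun _ => card_filter_mem_rowsOfWord w,
      fun v k k' hkk' => ?_⟩
    · have := hcard k
      have := congrFun hc k
      omega
    · show #{x ∈ rowsOfWord w k' | x ≤ v} ≤ #{x ∈ rowsOfWord w k | x ≤ v}
      have := hw v hkk'
      have := hcount v k
      have := hcount v k'
      omega

open Classical in
noncomputable def wordOfRows (R : Fin (r + 1) → Finset ℕ) (u : Fin g) : Fin (r + 1) :=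
  if h : ∃ k, u.val + 1 ∉ R k then h.choose else 0

theorem wordOfRows_eq {R : Fin (r + 1) → Finset ℕ} {u : Fin g} {a : Fin (r + 1)}
    (h : ∀ k, u.val + 1 ∉ R k ↔ k = a) : wordOfRows R u = a := by
  have hex : ∃ k, u.val + 1 ∉ R k := ⟨a, (h a).mpr rfl⟩
  rw [wordOfRows, dif_pos hex]
  exact (h _).mp hex.choose_spec

theorem wordOfRows_rowsOfWord (w : Fin g → Fin (r + 1)) : wordOfRows (rowsOfWord w) = w :=
  funext fun _ => wordOfRows_eq fun _ => by rw [succ_mem_rowsOfWord_iff, not_not, eq_comm]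

theorem rowsOfWord_wordOfRows {N : ℕ} {R : Fin (r + 1) → Finset ℕ}
    (hR : IsTableauRows g r N R) : rowsOfWord (wordOfRows R : Fin g → Fin (r + 1)) = R := by
  have hword (u : Fin g) (k : Fin (r + 1)) : wordOfRows R u = k ↔ u.val + 1 ∉ R k := by
    have hv : u.val + 1 ∈ Icc 1 g := mem_Icc.mpr ⟨by omega, u.2⟩
    have hone : #{k | u.val + 1 ∉ R k} = 1 := by
      have := card_filter_add_card_filter_not (s := univ) (fun k => u.val + 1 ∈ R k)
      rw [hR.card_filter_mem _ hv, Finset.card_univ, Fintype.card_fin] at this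
      omega
    obtain ⟨a, ha⟩ := card_eq_one.mp hone
    have hiff (k : Fin (r + 1)) : u.val + 1 ∉ R k ↔ k = a := by
      simpa using congrArg (k ∈ ·) ha
    rw [wordOfRows_eq hiff, hiff, eq_comm]
  funext k
  ext v
  rw [mem_rowsOfWord_iff]
  constructor
  · rintro ⟨u, hu, rfl⟩
    exact not_not.mp (mt (hword u k).mpr hu)
  · intro hv
    obtain ⟨hv1, hv2⟩ := mem_Icc.mp (hR.subset_Icc k hv)
    exact ⟨⟨v - 1, by omega⟩, fun h => (hword _ k).mp h (by simpa [Nat.sub_add_cancel hv1]), by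
      simp [Nat.sub_add_cancel hv1]⟩

theorem card_isBallot_eq_card_isTableauRows {s : ℕ} (hg : g = (r + 1) * s) :
    Nat.card {w : Fin g → Fin (r + 1) // IsBallot w ∧ prefixCount w g = fun _ => s} =
      Nat.card {R : Fin (r + 1) → Finset ℕ // IsTableauRows g r (r * s) R} :=
  Nat.card_congr
    { toFun w := ⟨rowsOfWord w.1, (isTableauRows_rowsOfWord_iff hg w.1).mpr w.2⟩
      invFun R := ⟨wordOfRows R.1, (isTableauRows_rowsOfWord_iff hg _).mp
        ((rowsOfWord_wordOfRows R.2).symm ▸ R.2)⟩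
      left_inv w := Subtype.ext (wordOfRows_rowsOfWord w.1)
      right_inv R := Subtype.ext (rowsOfWord_wordOfRows R.2) }

end Words

/-- Castelnuovo's count: if g = (r+1)·s, the number of transposed SSYT of content
(r^g) filling exactly the (r+1)×(r·s) rectangle equals
g!·(1!·2!⋯r!)/(s!·(s+1)!⋯(s+r)!). -/
theorem stmt_10 (g r s : ℕ) (hg : g = (r + 1) * s) :
    (Nat.card {T : TrSSYT g r r // ∀ (i : Fin (r + 1)) (j : ℕ),
        (T.entry i j).isSome ↔ j < r * s} : ℚ) =
      (Nat.factorial g : ℚ) *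
        (∏ t ∈ Finset.range (r + 1), (Nat.factorial t : ℚ)) /
        (∏ t ∈ Finset.range (r + 1), (Nat.factorial (s + t) : ℚ)) := by
  have hcontent : ∑ _k : Fin (r + 1), s = g := by simp [hg, mul_comm]
  calc (Nat.card {T : TrSSYT g r r // T.IsRectangular (r * s)} : ℚ)
      = Nat.card {w : Fin g → Fin (r + 1) // IsBallot w ∧ prefixCount w g = fun _ => s} := by
        rw [TrSSYT.card_isRectangular_eq_card_isTableauRows,
          card_isBallot_eq_card_isTableauRows hg]
    _ = g ! * (ballotMatrix fun _ : Fin (r + 1) => (s : ℤ)).det :=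
        card_isBallot_prefixCount_eq _ monotone_const hcontent
    _ = _ := by rw [det_ballotMatrix_const, mul_div_assoc]
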